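/- Let n ≥ 6. Suppose A and A∪{x} are 3-coloured graphs in the class K with x a line, and δ(x/A) ≥ 0. Then A ∩ res(x) contains at most one point and at most one plane. (Arithmetic form: if a = |points of A incident to x|, b = |planes of A incident to x|, f = number of flags (p, x, e) with p, e ∈ A, where f ≤ max(a,b) and min(a,b) ≤ 1 by the K-axioms, and (3(n-1)-1) - (2(n-1)-1)(a+b) + (n-1)f ≥ 0, then a ≤ 1 and b ≤ 1.) -/
import Mathlib

/-- arithmetic form: let `n ≥ 6`, let `a` be the number of points of `A`
incident to the line `x`, `b` the number of planes of `A` incident to `x`, and `f` the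
number of flags `(p,x,e)` with `p,e ∈ A` (so `f ≤ a·b`), where `f ≤ max(a,b)` and
`min(a,b) ≤ 1` by the K-axioms. If
`δ(x/A) = (3(n-1)-1) - (2(n-1)-1)(a+b) + (n-1)f ≥ 0`, then `a ≤ 1` and `b ≤ 1`. -/
theorem stmt7 (n a b f : ℤ) (hn : 6 ≤ n) (ha : 0 ≤ a) (hb : 0 ≤ b) (hf : 0 ≤ f)
    (hfmax : f ≤ max a b) (hfab : f ≤ a * b) (hmin : min a b ≤ 1)
    (hdelta : 0 ≤ (3 * (n - 1) - 1) - (2 * (n - 1) - 1) * (a + b) + (n - 1) * f) :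
    a ≤ 1 ∧ b ≤ 1 := by
  have hmin' := min_le_iff.mp hmin
  constructor
  · by_contra h
    push_neg at h
    have hb1 : b ≤ 1 := by omega
    have hmax : max a b = a := max_eq_left (by omega)
    rw [hmax] at hfmax
    interval_cases b
    · nlinarith
    · nlinarith
  · by_contra h
    push_neg at h
    have ha1 : a ≤ 1 := by omega
    have hmax : max a b = b := max_eq_right (by omega)
    rw [hmax] at hfmax
    interval_cases a
    · nlinarith
    · nlinarith
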